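/- Let L be a symmetric PSD matrix with eigenvalues in [0, λ_max]. Suppose the kernels satisfy the frame condition G(λ) := h(λ)² + Σ_{τ=1}^{J} g(t_τ λ)² ≥ c > 0 for all λ ∈ [0, λ_max]. Then the SGWT analysis operator W f = (h(L)f, g(t_1 L)f, …, g(t_J L)f) satisfies ‖Wf‖² = Σ components' squared norms ≥ c ‖f‖², hence W is injective and the transform is invertible. -/

import Mathlib

/-! In the eigenbasis `chi`, each component of the transform just multiplies the coefficient
`⟨chi l, f⟩` by a kernel value, so its energy is `∑ l, φ (lam l) ^ 2 * ⟨chi l, f⟩ ^ 2`. Summing over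
the components gives `∑ l, G (lam l) * ⟨chi l, f⟩ ^ 2 ≥ c * ∑ l, ⟨chi l, f⟩ ^ 2 = c * ‖f‖ ^ 2`, by
Parseval for the orthogonal matrix with rows `chi l`. Injectivity follows since the transform is
linear and `c > 0`. -/

open Matrix

/-- Functional calculus applied to a signal, given the spectral data. -/
def specApply {N : ℕ} (lam : Fin N → ℝ) (chi : Fin N → Fin N → ℝ)
    (φ : ℝ → ℝ) (f : Fin N → ℝ) : Fin N → ℝ :=
  fun n => ∑ l, φ (lam l) * (chi l ⬝ᵥ f) * chi l n

section Orthogonal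

variable {ι R : Type*} [Fintype ι] [DecidableEq ι]

theorem Matrix.mul_transpose_eq_one_of_orthonormal_rows [CommRing R] {U : Matrix ι ι R}
    (h : ∀ i j, U i ⬝ᵥ U j = if i = j then 1 else 0) : U * Uᵀ = 1 := by
  ext i j
  simpa [mul_apply', one_apply] using h i j

theorem Matrix.dotProduct_mulVec_self_of_transpose_mul_self [CommRing R] {U : Matrix ι ι R}
    (hU : Uᵀ * U = 1) (v : ι → R) : U *ᵥ v ⬝ᵥ U *ᵥ v = v ⬝ᵥ v := by
  rw [dotProduct_mulVec, ← mulVec_transpose, mulVec_mulVec, hU, one_mulVec]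

omit [DecidableEq ι] in
theorem sum_sq_eq_dotProduct_self [CommSemiring R] (v : ι → R) :
    ∑ i, v i ^ 2 = v ⬝ᵥ v := by
  simp only [dotProduct, sq]

end Orthogonal

section SpectralCalculus

variable {N : ℕ} (lam : Fin N → ℝ) {chi : Fin N → Fin N → ℝ}

theorem specApply_eq_mulVec (φ : ℝ → ℝ) (f : Fin N → ℝ) :
    specApply lam chi φ f = (of chi)ᵀ *ᵥ fun l => φ (lam l) * (of chi *ᵥ f) l := by
  ext n
  simp only [specApply, mulVec, dotProduct, transpose_apply, of_apply]
  exact Finset.sum_congr rfl fun l _ => by ring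

theorem specApply_sub (φ : ℝ → ℝ) (f f' : Fin N → ℝ) :
    specApply lam chi φ (f - f') = specApply lam chi φ f - specApply lam chi φ f' := by
  ext n
  simp only [specApply, Pi.sub_apply, dotProduct_sub, ← Finset.sum_sub_distrib]
  exact Finset.sum_congr rfl fun l _ => by ring

variable (horth : ∀ i j, chi i ⬝ᵥ chi j = if i = j then (1 : ℝ) else 0)
include horth

theorem sum_sq_dotProduct_of_orthonormal (f : Fin N → ℝ) :
    ∑ l, (chi l ⬝ᵥ f) ^ 2 = ∑ n, f n ^ 2 := by
  have hU : (of chi)ᵀ * of chi = 1 :=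
    mul_eq_one_comm.mp (mul_transpose_eq_one_of_orthonormal_rows horth)
  calc ∑ l, (chi l ⬝ᵥ f) ^ 2 = of chi *ᵥ f ⬝ᵥ of chi *ᵥ f := sum_sq_eq_dotProduct_self _
    _ = f ⬝ᵥ f := dotProduct_mulVec_self_of_transpose_mul_self hU f
    _ = ∑ n, f n ^ 2 := (sum_sq_eq_dotProduct_self f).symm

theorem sum_sq_specApply (φ : ℝ → ℝ) (f : Fin N → ℝ) :
    ∑ n, specApply lam chi φ f n ^ 2 = ∑ l, φ (lam l) ^ 2 * (chi l ⬝ᵥ f) ^ 2 := by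
  have hU : (of chi)ᵀᵀ * (of chi)ᵀ = 1 := mul_transpose_eq_one_of_orthonormal_rows horth
  rw [specApply_eq_mulVec, sum_sq_eq_dotProduct_self,
    dotProduct_mulVec_self_of_transpose_mul_self hU, ← sum_sq_eq_dotProduct_self]
  exact Finset.sum_congr rfl fun l _ => by rw [mul_pow]; rfl

variable {J : ℕ} (h g : ℝ → ℝ) (t : Fin J → ℝ)

theorem sgwt_energy_eq (f : Fin N → ℝ) :
    (∑ n, specApply lam chi h f n ^ 2) +
        ∑ τ, ∑ n, specApply lam chi (fun x => g (t τ * x)) f n ^ 2 =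
      ∑ l, (h (lam l) ^ 2 + ∑ τ, g (t τ * lam l) ^ 2) * (chi l ⬝ᵥ f) ^ 2 := by
  simp only [sum_sq_specApply lam horth, add_mul, Finset.sum_mul, Finset.sum_add_distrib]
  rw [Finset.sum_comm (γ := Fin J)]

theorem sgwt_lower_bound {lamMax c : ℝ} (hspec : ∀ l, lam l ∈ Set.Icc (0 : ℝ) lamMax)
    (hframe : ∀ x ∈ Set.Icc (0 : ℝ) lamMax, c ≤ h x ^ 2 + ∑ τ, g (t τ * x) ^ 2)
    (f : Fin N → ℝ) :
    c * ∑ n, f n ^ 2 ≤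
      (∑ n, specApply lam chi h f n ^ 2) +
        ∑ τ, ∑ n, specApply lam chi (fun x => g (t τ * x)) f n ^ 2 := by
  rw [sgwt_energy_eq lam horth, ← sum_sq_dotProduct_of_orthonormal horth, Finset.mul_sum]
  exact Finset.sum_le_sum fun l _ => mul_le_mul_of_nonneg_right (hframe _ (hspec l)) (sq_nonneg _)

end SpectralCalculus

theorem sgwt_frame_lower_bound_and_injective {N J : ℕ}
    (lam : Fin N → ℝ) (chi : Fin N → Fin N → ℝ)
    (horth : ∀ i j, chi i ⬝ᵥ chi j = if i = j then (1 : ℝ) else 0)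
    (lamMax : ℝ)
    (hspec : ∀ l, lam l ∈ Set.Icc (0 : ℝ) lamMax)
    (h g : ℝ → ℝ) (t : Fin J → ℝ) (c : ℝ) (hc : 0 < c)
    (hframe : ∀ x ∈ Set.Icc (0 : ℝ) lamMax,
      c ≤ h x ^ 2 + ∑ τ, g (t τ * x) ^ 2) :
    (∀ f : Fin N → ℝ,
      c * ∑ n, f n ^ 2 ≤
        (∑ n, (specApply lam chi h f n) ^ 2) +
          ∑ τ, ∑ n, (specApply lam chi (fun x => g (t τ * x)) f n) ^ 2) ∧
    Function.Injective (fun f : Fin N → ℝ =>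
      (specApply lam chi h f,
        fun τ : Fin J => specApply lam chi (fun x => g (t τ * x)) f)) := by
  have lower := sgwt_lower_bound lam horth h g t hspec hframe
  refine ⟨lower, fun f f' hff => ?_⟩
  have hh : specApply lam chi h f = specApply lam chi h f' := congrArg Prod.fst hff
  have hg (τ : Fin J) : specApply lam chi (fun x => g (t τ * x)) f =
      specApply lam chi (fun x => g (t τ * x)) f' := congrFun (congrArg Prod.snd hff) τ
  have hle : c * ∑ n, (f - f') n ^ 2 ≤ c * 0 := by
    simpa only [specApply_sub, hh, hg, sub_self, Pi.zero_apply, ne_eq, two_ne_zero,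
      not_false_eq_true, zero_pow, Finset.sum_const_zero, add_zero, mul_zero] using lower (f - f')
  have hzero : ∑ n, (f - f') n ^ 2 = 0 :=
    le_antisymm (le_of_mul_le_mul_left hle hc) (Finset.sum_nonneg fun n _ => sq_nonneg _)
  rwa [sum_sq_eq_dotProduct_self, dotProduct_self_eq_zero, sub_eq_zero] at hzero
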